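/- With x(t) = c·cos(−t + π) + c and ẋ(t) = c·sin(−t + π), the action A(c) = ∫₀^{t₁} (ẋ(t)²/(2x(t)) − x(t)/2) dt equals c·sin(−t₁ + π) = c·sin(t₁). -/

import Mathlib

open intervalIntegral in
/-- The action of the Dafermos-oscillator trajectory `x t = c cos(-t+π) + c`,
`ẋ t = c sin(-t+π)` over `[0, t₁]` (with `0 < t₁ < π`) equals `c sin(-t₁+π) = c sin t₁`. -/
theorem dafermos_action_on_circle (c t₁ : ℝ) (hc : 1 ≤ c)
    (ht₁ : 0 < t₁) (ht₁' : t₁ < Real.pi) :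
    (∫ t in (0:ℝ)..t₁,
        ((c * Real.sin (-t + Real.pi))^2 / (2 * (c * Real.cos (-t + Real.pi) + c))
          - (c * Real.cos (-t + Real.pi) + c) / 2))
      = c * Real.sin (-t₁ + Real.pi)
    ∧ c * Real.sin (-t₁ + Real.pi) = c * Real.sin t₁ := by
  have hc0 : (0:ℝ) < c := lt_of_lt_of_le one_pos hc
  have hsin : Real.sin (-t₁ + Real.pi) = Real.sin t₁ := by
    rw [show -t₁ + Real.pi = Real.pi - t₁ by ring, Real.sin_pi_sub]
  refine ⟨?_, by rw [hsin]⟩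
  have key : (∫ t in (0:ℝ)..t₁,
        ((c * Real.sin (-t + Real.pi))^2 / (2 * (c * Real.cos (-t + Real.pi) + c))
          - (c * Real.cos (-t + Real.pi) + c) / 2))
      = ∫ t in (0:ℝ)..t₁, c * Real.cos t := by
    apply intervalIntegral.integral_congr_ae
    have huIoc : Set.uIoc (0:ℝ) t₁ = Set.Ioc 0 t₁ := Set.uIoc_of_le ht₁.le
    filter_upwards with t ht
    have hmem : t ∈ Set.Ioc (0:ℝ) t₁ := huIoc ▸ ht
    have ht0 : 0 < t := hmem.1
    have htpi : t < Real.pi := lt_of_le_of_lt hmem.2 ht₁'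
    have hsinpos : 0 < Real.sin t := Real.sin_pos_of_pos_of_lt_pi ht0 htpi
    have hcos : Real.cos t < 1 := by
      nlinarith [Real.sin_sq_add_cos_sq t, Real.neg_one_le_cos t]
    have hd : (0:ℝ) < 1 - Real.cos t := by linarith
    rw [show -t + Real.pi = Real.pi - t by ring, Real.sin_pi_sub, Real.cos_pi_sub]
    have hs2 : Real.sin t ^ 2 = 1 - Real.cos t ^ 2 := Real.sin_sq t
    have hne : -(c * Real.cos t) + c ≠ 0 := by
      have : -(c * Real.cos t) + c = c * (1 - Real.cos t) := by ring
      rw [this]; positivity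
    field_simp
    rw [div_eq_iff (by linarith)]
    linear_combination hs2
  rw [key, hsin]
  rw [intervalIntegral.integral_const_mul, integral_cos]
  simp
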